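/- Let (G, ψ) be an ordered graph, 𝒫 a partition of V(G), H any graph with vertex set 𝒫, and k a positive integer. Let 𝒫' be a partition of V(G) refining 𝒫 such that each part of 𝒫 is the union of at most k parts of 𝒫', and let H' be the graph with vertex set 𝒫' in which two distinct parts P', Q' ∈ 𝒫' are adjacent exactly when the parts P, Q ∈ 𝒫 containing them are equal or adjacent in H. Then str(𝒫', H') ≤ k · (str(𝒫, H) + 1). -/

import Mathlib

open SimpleGraph

/-- The convex closure (span) of a set of vertices in a linearly ordered vertex set. -/
def conv {V : Type*} [LinearOrder V] (X : Set V) : Set V :=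
  {v | ∃ a ∈ X, ∃ b ∈ X, a ≤ v ∧ v ≤ b}

/-- The `r`-th power of a graph: two distinct vertices are adjacent exactly when they
are joined by a walk of length at most `r`. -/
def powerGraph {α : Type*} (H : SimpleGraph α) (r : ℕ) : SimpleGraph α where
  Adj x y := x ≠ y ∧ ∃ w : H.Walk x y, w.length ≤ r
  symm := by
    constructor
    rintro x y ⟨hxy, w, hw⟩
    exact ⟨hxy.symm, w.reverse, by simpa using hw⟩
  loopless := by
    constructor
    rintro x ⟨hx, -⟩
    exact hx rfl

/-- The `H`-stretch of a part `X` of the partition `Prt` (w.r.t. the vertex ordering):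
the number of parts whose span meets the span of the union of the closed
`H`-neighborhood of `X`. -/
noncomputable def strOf {V : Type*} [LinearOrder V] (Prt : Set (Set V))
    (H : SimpleGraph ↥Prt) (X : ↥Prt) : ℕ :=
  {Y : ↥Prt | (conv (Y : Set V) ∩
    conv (⋃ Z ∈ {Z : ↥Prt | Z = X ∨ H.Adj X Z}, (Z : Set V))).Nonempty}.ncard

/-- The stretch `str(Prt, H)`: the maximum `H`-stretch of a part of `Prt`. -/
noncomputable def strP {V : Type*} [LinearOrder V] (Prt : Set (Set V))
    (H : SimpleGraph ↥Prt) : ℕ :=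
  sSup (Set.range (strOf Prt H))

/-!
Send each part `Y'` of `𝒫'` to the part `f Y'` of `𝒫` containing it. The closed
`H'`-neighbourhood of `X'` is covered by the closed `H`-neighbourhood of `f X'`, so the span of its
union is contained in the corresponding span for `f X'`. Hence every part interfering with `X'`
lies in a part interfering with `f X'`, and at most `k` parts of `𝒫'` lie in any given part of `𝒫`.
-/

theorem Set.ncard_le_mul_ncard_of_mapsTo {α β : Type*} {s : Set α} {t : Set β} {f : α → β}
    (hs : s.Finite) (ht : t.Finite) (hf : Set.MapsTo f s t) (n : ℕ)
    (hn : ∀ b ∈ t, {a ∈ s | f a = b}.ncard ≤ n) : s.ncard ≤ n * t.ncard := by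
  classical
  lift s to Finset α using hs
  lift t to Finset β using ht
  simp only [Set.ncard_coe_finset]
  refine Finset.card_le_mul_card_image_of_maps_to hf n fun b hb => ?_
  rw [← Set.ncard_coe_finset, Finset.coe_filter]
  exact hn b hb

section Stretch

variable {V : Type*}

lemma conv_mono [LinearOrder V] {X Y : Set V} (h : X ⊆ Y) : conv X ⊆ conv Y := by
  rintro v ⟨a, ha, b, hb, hav, hvb⟩
  exact ⟨a, h ha, b, h hb, hav, hvb⟩

/-- The union of the parts in the closed `H`-neighbourhood `N_H[X]`. -/
def closedNbhdUnion (Prt : Set (Set V)) (H : SimpleGraph ↥Prt) (X : ↥Prt) : Set V :=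
  ⋃ Z ∈ {Z : ↥Prt | Z = X ∨ H.Adj X Z}, (Z : Set V)

lemma strOf_eq_ncard [LinearOrder V] (Prt : Set (Set V)) (H : SimpleGraph ↥Prt) (X : ↥Prt) :
    strOf Prt H X =
      {Y : ↥Prt | (conv (Y : Set V) ∩ conv (closedNbhdUnion Prt H X)).Nonempty}.ncard :=
  rfl

lemma strOf_le_strP [LinearOrder V] {Prt : Set (Set V)} [Finite Prt] (H : SimpleGraph ↥Prt)
    (X : ↥Prt) : strOf Prt H X ≤ strP Prt H :=
  le_csSup (Set.finite_range _).bddAbove ⟨X, rfl⟩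

lemma strOf_le_mul_strOf [LinearOrder V] [Finite V] {Prt Prt' : Set (Set V)}
    (H : SimpleGraph ↥Prt) (H' : SimpleGraph ↥Prt') (f : ↥Prt' → ↥Prt)
    (hf : ∀ Y' : ↥Prt', (Y' : Set V) ⊆ f Y') {k : ℕ}
    (hbound : ∀ P ∈ Prt, {P' ∈ Prt' | P' ⊆ P}.ncard ≤ k)
    (X' : ↥Prt') (hX' : closedNbhdUnion Prt' H' X' ⊆ closedNbhdUnion Prt H (f X')) :
    strOf Prt' H' X' ≤ k * strOf Prt H (f X') := by
  rw [strOf_eq_ncard, strOf_eq_ncard]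
  refine Set.ncard_le_mul_ncard_of_mapsTo (f := f) (Set.toFinite _) (Set.toFinite _) ?_ k ?_
  · rintro Y' ⟨v, hvY', hvX'⟩
    exact ⟨v, conv_mono (hf Y') hvY', conv_mono hX' hvX'⟩
  · intro Y _
    refine (Set.ncard_le_ncard_of_injOn Subtype.val ?_ Subtype.val_injective.injOn
      (Set.toFinite _)).trans (hbound Y Y.2)
    rintro Y' ⟨-, rfl⟩
    exact ⟨Y'.2, hf Y'⟩

lemma closedNbhdUnion_subset {Prt Prt' : Set (Set V)} (hPrt : Setoid.IsPartition Prt)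
    (hPrt' : Setoid.IsPartition Prt') (H : SimpleGraph ↥Prt) (H' : SimpleGraph ↥Prt')
    (hH' : ∀ P' Q' : ↥Prt', H'.Adj P' Q' → ∃ P Q : ↥Prt, (P' : Set V) ⊆ (P : Set V) ∧
      (Q' : Set V) ⊆ (Q : Set V) ∧ (P = Q ∨ H.Adj P Q))
    (f : ↥Prt' → ↥Prt) (hf : ∀ Y' : ↥Prt', (Y' : Set V) ⊆ f Y') (X' : ↥Prt') :
    closedNbhdUnion Prt' H' X' ⊆ closedNbhdUnion Prt H (f X') := by
  refine Set.iUnion₂_subset fun Z' hZ' => ?_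
  obtain ⟨Z, hZ, hZ'Z⟩ : ∃ Z : ↥Prt, (Z = f X' ∨ H.Adj (f X') Z) ∧ (Z' : Set V) ⊆ Z := by
    rcases hZ' with rfl | hadj
    · exact ⟨f Z', Or.inl rfl, hf Z'⟩
    obtain ⟨P, Q, hX'P, hZ'Q, hPQ⟩ := hH' X' Z' hadj
    obtain ⟨x, hx⟩ := Setoid.nonempty_of_mem_partition hPrt' X'.2
    obtain rfl : P = f X' :=
      Subtype.ext <| Setoid.eq_of_mem_eqv_class hPrt.2 P.2 (hX'P hx) (f X').2 (hf X' hx)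
    exact ⟨Q, hPQ.imp Eq.symm id, hZ'Q⟩
  exact hZ'Z.trans (Set.subset_biUnion_of_mem (u := fun Z : ↥Prt => (Z : Set V)) hZ)

end Stretch

theorem stmt13_general {V : Type*} [Fintype V] [LinearOrder V]
    (Prt Prt' : Set (Set V))
    (hpart : Setoid.IsPartition Prt) (hpart' : Setoid.IsPartition Prt')
    (k : ℕ)
    (hrefine : ∀ P' ∈ Prt', ∃ P ∈ Prt, P' ⊆ P)
    (hbound : ∀ P ∈ Prt, {P' ∈ Prt' | P' ⊆ P}.ncard ≤ k)
    (H : SimpleGraph ↥Prt) (H' : SimpleGraph ↥Prt')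
    (hH' : ∀ P' Q' : ↥Prt', H'.Adj P' Q' ↔ P' ≠ Q' ∧
      ∃ P Q : ↥Prt, (P' : Set V) ⊆ (P : Set V) ∧ (Q' : Set V) ⊆ (Q : Set V) ∧
        (P = Q ∨ H.Adj P Q)) :
    strP Prt' H' ≤ k * (strP Prt H + 1) := by
  choose F hF hFsub using hrefine
  let f : ↥Prt' → ↥Prt := fun Y' => ⟨F Y' Y'.2, hF _ Y'.2⟩
  have hf : ∀ Y' : ↥Prt', (Y' : Set V) ⊆ f Y' := fun Y' => hFsub _ Y'.2
  refine csSup_le' ?_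
  rintro n ⟨X', rfl⟩
  calc strOf Prt' H' X' ≤ k * strOf Prt H (f X') :=
        strOf_le_mul_strOf H H' f hf hbound X' <|
          closedNbhdUnion_subset hpart hpart' H H' (fun P' Q' h => ((hH' P' Q').1 h).2) f hf X'
    _ ≤ k * (strP Prt H + 1) := Nat.mul_le_mul_left k ((strOf_le_strP H _).trans (Nat.le_succ _))

theorem stmt13 {V : Type*} [Fintype V] [LinearOrder V] (G : SimpleGraph V)
    (Prt Prt' : Set (Set V))
    (hpart : Setoid.IsPartition Prt) (hpart' : Setoid.IsPartition Prt')
    (k : ℕ) (hk : 0 < k)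
    (hrefine : ∀ P' ∈ Prt', ∃ P ∈ Prt, P' ⊆ P)
    (hbound : ∀ P ∈ Prt, {P' ∈ Prt' | P' ⊆ P}.ncard ≤ k)
    (H : SimpleGraph ↥Prt) (H' : SimpleGraph ↥Prt')
    (hH' : ∀ P' Q' : ↥Prt', H'.Adj P' Q' ↔ P' ≠ Q' ∧
      ∃ P Q : ↥Prt, (P' : Set V) ⊆ (P : Set V) ∧ (Q' : Set V) ⊆ (Q : Set V) ∧
        (P = Q ∨ H.Adj P Q)) :
    strP Prt' H' ≤ k * (strP Prt H + 1) :=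
  stmt13_general Prt Prt' hpart hpart' k hrefine hbound H H' hH'
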